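/- Let (U_j)_{j≥1} and (V_k)_{k≥1} be two independent sequences, each consisting of i.i.d. random elements, and let H be a bounded measurable real-valued function with E[H(U_1, U_2, V_1)] = 0. Then T_N = N^{-3} Σ_{i=1}^N Σ_{j=1}^N Σ_{k=1}^N H(U_i, U_j, V_k) converges to 0 almost surely as N → ∞. -/

import Mathlib

/-!
Write `X_t = H(U_i, U_j, V_k)` for `t = (i, j, k)`. If `i ≠ j`, then `(U_i, U_j, V_k)` has the
law of `(U_0, U_1, V_0)`, so `X_t` is centered, and `X_t`, `X_{t'}` are independent unless one of
seven index coincidences occurs. At most `7 N⁵` of the `N⁶` pairs `(t, t')` are of this kind, so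
`E[T_N²] ≤ 7 C² / N`. Along the squares `N = m²` these bounds are summable, hence `∑ₘ T_{m²}²` is
integrable and `T_{m²} → 0` almost surely. Between consecutive squares only a vanishing proportion
of the summands changes, so `T_N` moves by `O(C / m)` there.
-/

open MeasureTheory ProbabilityTheory Filter Finset Topology

lemma tendsto_zero_of_tendsto_comp_sq {T δ : ℕ → ℝ}
    (hsq : Tendsto (fun m => T (m ^ 2)) atTop (𝓝 0)) (hδ : Tendsto δ atTop (𝓝 0))
    (hT : ∀ N, |T N - T (N.sqrt ^ 2)| ≤ δ N.sqrt) :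
    Tendsto T atTop (𝓝 0) := by
  have hsqrt : Tendsto Nat.sqrt atTop atTop :=
    tendsto_atTop_atTop.2 fun m => ⟨m ^ 2, fun N hN => Nat.le_sqrt'.2 hN⟩
  have hclose : Tendsto (fun N => T N - T (N.sqrt ^ 2)) atTop (𝓝 0) :=
    squeeze_zero_norm (fun N => hT N) (hδ.comp hsqrt)
  simpa using hclose.add (hsq.comp hsqrt)

section SumOfSquares

variable {Ω : Type*} [MeasurableSpace Ω] {P : Measure Ω}

lemma MeasureTheory.integral_sq_sum_le [IsProbabilityMeasure P] {ι : Type*} (s : Finset ι)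
    {X : ι → Ω → ℝ} {C : ℝ} (hX : ∀ i, AEStronglyMeasurable (X i) P) (hC : ∀ i ω, |X i ω| ≤ C)
    (r : ι → ι → Prop) [DecidableRel r] (horth : ∀ i j, r i j → ∫ ω, X i ω * X j ω ∂P = 0) :
    ∫ ω, (∑ i ∈ s, X i ω) ^ 2 ∂P ≤ C ^ 2 * #{p ∈ s ×ˢ s | ¬ r p.1 p.2} := by
  have hprod : ∀ i j ω, ‖X i ω * X j ω‖ ≤ C ^ 2 := fun i j ω => by
    rw [Real.norm_eq_abs, abs_mul, sq]
    exact mul_le_mul (hC i ω) (hC j ω) (abs_nonneg _) ((abs_nonneg _).trans (hC i ω))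
  have hint : ∀ i j, Integrable (fun ω => X i ω * X j ω) P := fun i j =>
    .of_bound ((hX i).mul (hX j)) _ (ae_of_all _ (hprod i j))
  have hterm : ∀ p : ι × ι, ∫ ω, X p.1 ω * X p.2 ω ∂P ≤ if r p.1 p.2 then 0 else C ^ 2 := by
    intro p
    split_ifs with hp
    · exact (horth _ _ hp).le
    · simpa using (le_abs_self _).trans
        (norm_integral_le_of_norm_le_const (μ := P) (ae_of_all _ (hprod p.1 p.2)))
  calc ∫ ω, (∑ i ∈ s, X i ω) ^ 2 ∂P = ∑ p ∈ s ×ˢ s, ∫ ω, X p.1 ω * X p.2 ω ∂P := by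
        simp_rw [sq, sum_mul_sum, ← sum_product']
        exact integral_finsetSum _ fun p _ => hint _ _
    _ ≤ ∑ p ∈ s ×ˢ s, if r p.1 p.2 then 0 else C ^ 2 := sum_le_sum fun p _ => hterm p
    _ = C ^ 2 * #{p ∈ s ×ˢ s | ¬ r p.1 p.2} := by
        rw [sum_ite, sum_const_zero, zero_add, sum_const, nsmul_eq_mul, mul_comm]

lemma MeasureTheory.ae_tendsto_zero_of_summable_integral_sq {Y : ℕ → Ω → ℝ}
    (hY : ∀ n, AEMeasurable (Y n) P) (hint : ∀ n, Integrable (fun ω => Y n ω ^ 2) P)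
    (hsum : Summable fun n => ∫ ω, Y n ω ^ 2 ∂P) :
    ∀ᵐ ω ∂P, Tendsto (fun n => Y n ω) atTop (𝓝 0) := by
  have hmeas : ∀ n, AEMeasurable (fun ω => ENNReal.ofReal (Y n ω ^ 2)) P :=
    fun n => ((hY n).pow_const 2).ennreal_ofReal
  -- `∑ₙ Yₙ²` has finite expectation, hence is finite almost surely
  have hfin : ∫⁻ ω, ∑' n, ENNReal.ofReal (Y n ω ^ 2) ∂P ≠ ⊤ := by
    rw [lintegral_tsum hmeas]
    simp_rw [← ofReal_integral_eq_lintegral_ofReal (hint _) (ae_of_all _ fun ω => sq_nonneg _)]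
    rw [← ENNReal.ofReal_tsum_of_nonneg (fun n => integral_nonneg fun ω => sq_nonneg _) hsum]
    exact ENNReal.ofReal_ne_top
  filter_upwards [ae_lt_top' (AEMeasurable.tsum hmeas) hfin] with ω hω
  have hsq : Tendsto (fun n => Y n ω ^ 2) atTop (𝓝 0) := by
    have := (ENNReal.tendsto_toReal ENNReal.zero_ne_top).comp
      (ENNReal.tendsto_atTop_zero_of_tsum_ne_top hω.ne)
    simpa [Function.comp_def, ENNReal.toReal_ofReal (sq_nonneg _)] using this
  have habs := (Real.continuous_sqrt.tendsto 0).comp hsq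
  simp only [Function.comp_def, Real.sqrt_sq_eq_abs, Real.sqrt_zero] at habs
  exact (tendsto_zero_iff_abs_tendsto_zero _).2 habs

end SumOfSquares

section Independence

variable {A B C D : Type*} [MeasurableSpace A] [MeasurableSpace B] [MeasurableSpace C]
  [MeasurableSpace D]

lemma MeasureTheory.Measure.map_prodProdProdComm (a : Measure A) (b : Measure B) (c : Measure C)
    (d : Measure D) [SFinite a] [SFinite b] [SFinite c] [SFinite d] :
    ((a.prod b).prod (c.prod d)).map (Equiv.prodProdProdComm A B C D) =
      (a.prod c).prod (b.prod d) := by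
  have hmiddle := (measurePreserving_prodAssoc c b d).comp
    ((Measure.measurePreserving_swap.prod (MeasurePreserving.id d)).comp
      ((measurePreserving_prodAssoc b c d).symm _))
  exact (((measurePreserving_prodAssoc a c (b.prod d)).symm _).comp
    (((MeasurePreserving.id a).prod hmiddle).comp
      (measurePreserving_prodAssoc a b (c.prod d)))).map_eq

variable {Ω : Type*} [MeasurableSpace Ω] {P : Measure Ω} [IsFiniteMeasure P]
  {X : Ω → A} {X' : Ω → B} {Y : Ω → C} {Y' : Ω → D}

lemma ProbabilityTheory.IndepFun.prodMk_prodMk_of_indepFun (hX : Measurable X)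
    (hX' : Measurable X') (hY : Measurable Y) (hY' : Measurable Y')
    (h : IndepFun (fun ω => (X ω, X' ω)) (fun ω => (Y ω, Y' ω)) P)
    (hXX' : IndepFun X X' P) (hYY' : IndepFun Y Y' P) :
    IndepFun (fun ω => (X ω, Y ω)) (fun ω => (X' ω, Y' ω)) P := by
  have hXY : IndepFun X Y P := h.comp measurable_fst measurable_fst
  have hX'Y' : IndepFun X' Y' P := h.comp measurable_snd measurable_snd
  rw [indepFun_iff_map_prod_eq_prod_map_map (by fun_prop) (by fun_prop),
    (indepFun_iff_map_prod_eq_prod_map_map hX.aemeasurable hY.aemeasurable).1 hXY,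
    (indepFun_iff_map_prod_eq_prod_map_map hX'.aemeasurable hY'.aemeasurable).1 hX'Y',
    ← Measure.map_prodProdProdComm,
    ← (indepFun_iff_map_prod_eq_prod_map_map hX.aemeasurable hX'.aemeasurable).1 hXX',
    ← (indepFun_iff_map_prod_eq_prod_map_map hY.aemeasurable hY'.aemeasurable).1 hYY',
    ← (indepFun_iff_map_prod_eq_prod_map_map (by fun_prop) (by fun_prop)).1 h,
    Measure.map_map (g := Equiv.prodProdProdComm A B C D)
      (show Measurable fun p : (A × B) × C × D => ((p.1.1, p.2.1), p.1.2, p.2.2) by fun_prop)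
      (by fun_prop)]
  rfl

end Independence

namespace ThreeIndex

def cube (N : ℕ) : Finset (ℕ × ℕ × ℕ) := range N ×ˢ range N ×ˢ range N

lemma card_cube (N : ℕ) : #(cube N) = N ^ 3 := by
  simp [cube]; ring

lemma cube_mono : Monotone cube := fun _ _ h => by
  unfold cube; gcongr

def Separated (t t' : ℕ × ℕ × ℕ) : Prop :=
  t.1 ≠ t.2.1 ∧ t'.1 ≠ t'.2.1 ∧ t.1 ≠ t'.1 ∧ t.1 ≠ t'.2.1 ∧ t.2.1 ≠ t'.1 ∧ t.2.1 ≠ t'.2.1 ∧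
    t.2.2 ≠ t'.2.2

instance : DecidableRel Separated := fun _ _ => by unfold Separated; infer_instance

lemma card_filter_le_pow_five_of_injOn {N : ℕ} {p : (ℕ × ℕ × ℕ) × (ℕ × ℕ × ℕ) → Prop}
    [DecidablePred p]
    (e : (ℕ × ℕ × ℕ) × (ℕ × ℕ × ℕ) → (ℕ × ℕ × ℕ) × ℕ × ℕ)
    (he : ∀ x ∈ cube N ×ˢ cube N, e x ∈ cube N ×ˢ range N ×ˢ range N)
    (hinj : ∀ x y, p x → p y → e x = e y → x = y) :
    #{x ∈ cube N ×ˢ cube N | p x} ≤ N ^ 5 :=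
  calc #{x ∈ cube N ×ˢ cube N | p x} ≤ #(cube N ×ˢ range N ×ˢ range N) :=
        card_le_card_of_injOn e (fun x hx => he x (mem_filter.1 hx).1)
          (fun x hx y hy hxy => hinj x y (mem_filter.1 hx).2 (mem_filter.1 hy).2 hxy)
    _ = N ^ 5 := by simp [cube]; ring

lemma card_not_separated_le (N : ℕ) :
    #{p ∈ cube N ×ˢ cube N | ¬ Separated p.1 p.2} ≤ 7 * N ^ 5 := by
  simp only [Separated, not_and_or, not_not, filter_or]
  grw [card_union_le, card_union_le, card_union_le, card_union_le, card_union_le, card_union_le]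
  -- each of the seven coincidences determines one of the six indices from the other five
  calc _ ≤ N ^ 5 + (N ^ 5 + (N ^ 5 + (N ^ 5 + (N ^ 5 + (N ^ 5 + N ^ 5))))) := by
        gcongr <;>
        first
        | exact card_filter_le_pow_five_of_injOn (fun x => (x.2, x.1.2))
            (by intro x hx; simp_all [cube]) (by rintro ⟨⟨⟩, ⟨⟩⟩ ⟨⟨⟩, ⟨⟩⟩; simp; grind)
        | exact card_filter_le_pow_five_of_injOn (fun x => (x.1, x.2.2))
            (by intro x hx; simp_all [cube]) (by rintro ⟨⟨⟩, ⟨⟩⟩ ⟨⟨⟩, ⟨⟩⟩; simp; grind)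
        | exact card_filter_le_pow_five_of_injOn (fun x => (x.1, x.2.1, x.2.2.2))
            (by intro x hx; simp_all [cube]) (by rintro ⟨⟨⟩, ⟨⟩⟩ ⟨⟨⟩, ⟨⟩⟩; simp; grind)
        | exact card_filter_le_pow_five_of_injOn (fun x => (x.1, x.2.1, x.2.2.1))
            (by intro x hx; simp_all [cube]) (by rintro ⟨⟨⟩, ⟨⟩⟩ ⟨⟨⟩, ⟨⟩⟩; simp; grind)
    _ = 7 * N ^ 5 := by ring

noncomputable def cubeAverage (f : ℕ × ℕ × ℕ → ℝ) (N : ℕ) : ℝ := ((N : ℝ) ^ 3)⁻¹ * ∑ t ∈ cube N, f t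

section Averages

variable {f : ℕ × ℕ × ℕ → ℝ} {C : ℝ}

lemma abs_sum_cube_sub_le (hf : ∀ t, |f t| ≤ C) {M N : ℕ} (h : M ≤ N) :
    |∑ t ∈ cube N, f t - ∑ t ∈ cube M, f t| ≤ C * ((N : ℝ) ^ 3 - (M : ℝ) ^ 3) := by
  rw [← sum_sdiff_eq_sub (cube_mono h)]
  calc _ ≤ ∑ t ∈ cube N \ cube M, |f t| := abs_sum_le_sum_abs _ _
    _ ≤ #(cube N \ cube M) • C := sum_le_card_nsmul _ _ _ fun t _ => hf t
    _ = C * ((N : ℝ) ^ 3 - (M : ℝ) ^ 3) := by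
      rw [card_sdiff_of_subset (cube_mono h), card_cube, card_cube, nsmul_eq_mul,
        Nat.cast_sub (by gcongr)]
      push_cast; ring

lemma abs_cubeAverage_le (hf : ∀ t, |f t| ≤ C) (N : ℕ) : |cubeAverage f N| ≤ C := by
  have hC : 0 ≤ C := (abs_nonneg _).trans (hf 0)
  rcases N.eq_zero_or_pos with rfl | hN
  · simpa [cubeAverage] using hC
  rw [cubeAverage, abs_mul, abs_inv, abs_pow, Nat.abs_cast, inv_mul_le_iff₀ (by positivity)]
  calc |∑ t ∈ cube N, f t| ≤ #(cube N) • C :=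
        (abs_sum_le_sum_abs _ _).trans (sum_le_card_nsmul _ _ _ fun t _ => hf t)
    _ = (N : ℝ) ^ 3 * C := by rw [card_cube, nsmul_eq_mul, Nat.cast_pow]

lemma abs_cubeAverage_sub_le (hf : ∀ t, |f t| ≤ C) {M N : ℕ} (h : M ≤ N) :
    |cubeAverage f N - cubeAverage f M| ≤ 2 * C * (1 - ((M : ℝ) / N) ^ 3) := by
  have hC : 0 ≤ C := (abs_nonneg _).trans (hf 0)
  rcases M.eq_zero_or_pos with rfl | hM
  · simpa [cubeAverage] using (abs_cubeAverage_le hf N).trans (by linarith)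
  have hN : (0 : ℝ) < N := by exact_mod_cast hM.trans_le h
  have hratio : ((M : ℝ) / N) ^ 3 ≤ 1 :=
    pow_le_one₀ (by positivity) ((div_le_one hN).2 (by exact_mod_cast h))
  have hsplit : cubeAverage f N - cubeAverage f M = ((N : ℝ) ^ 3)⁻¹ *
      (∑ t ∈ cube N, f t - ∑ t ∈ cube M, f t) - (1 - ((M : ℝ) / N) ^ 3) * cubeAverage f M := by
    unfold cubeAverage
    field_simp
    ring
  calc _ ≤ ((N : ℝ) ^ 3)⁻¹ * |∑ t ∈ cube N, f t - ∑ t ∈ cube M, f t|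
          + (1 - ((M : ℝ) / N) ^ 3) * |cubeAverage f M| := by
        rw [hsplit]
        refine (abs_sub _ _).trans ?_
        rw [abs_mul, abs_mul, abs_of_pos (by positivity : (0 : ℝ) < ((N : ℝ) ^ 3)⁻¹),
          abs_of_nonneg (sub_nonneg.2 hratio)]
    _ ≤ ((N : ℝ) ^ 3)⁻¹ * (C * ((N : ℝ) ^ 3 - (M : ℝ) ^ 3)) + (1 - ((M : ℝ) / N) ^ 3) * C := by
        gcongr
        · exact abs_sum_cube_sub_le hf h
        · exact abs_cubeAverage_le hf M
    _ = 2 * C * (1 - ((M : ℝ) / N) ^ 3) := by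
        field_simp
        ring

lemma tendsto_cubeAverage_of_tendsto_sq (hf : ∀ t, |f t| ≤ C)
    (hsq : Tendsto (fun m => cubeAverage f (m ^ 2)) atTop (𝓝 0)) :
    Tendsto (cubeAverage f) atTop (𝓝 0) := by
  have hC : 0 ≤ C := (abs_nonneg _).trans (hf 0)
  refine tendsto_zero_of_tendsto_comp_sq hsq (δ := fun m => 2 * C * (1 - ((m : ℝ) / (m + 1)) ^ 6))
    ?_ fun N => (abs_cubeAverage_sub_le hf N.sqrt_le').trans ?_
  · simpa using ((tendsto_natCast_div_add_atTop (1 : ℝ)).pow 6).const_sub 1 |>.const_mul (2 * C)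
  gcongr 2 * C * (1 - ?_)
  rcases N.eq_zero_or_pos with rfl | hN
  · simp
  have hlt : (N : ℝ) ≤ ((N.sqrt : ℝ) + 1) ^ 2 := by exact_mod_cast N.lt_succ_sqrt'.le
  calc ((N.sqrt : ℝ) / (N.sqrt + 1)) ^ 6 = ((N.sqrt : ℝ) ^ 2 / (N.sqrt + 1) ^ 2) ^ 3 := by
        rw [← div_pow, ← pow_mul]
    _ ≤ ((N.sqrt : ℝ) ^ 2 / N) ^ 3 := by gcongr
    _ = (((N.sqrt ^ 2 : ℕ) : ℝ) / N) ^ 3 := by push_cast; ring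

end Averages

section AlmostSureConvergence

variable {Ω : Type*} [MeasurableSpace Ω] {P : Measure Ω} [IsProbabilityMeasure P]
  {X : ℕ × ℕ × ℕ → Ω → ℝ} {C : ℝ}

lemma integral_sq_cubeAverage_le (hX : ∀ t, AEStronglyMeasurable (X t) P)
    (hC : ∀ t ω, |X t ω| ≤ C)
    (horth : ∀ t t', Separated t t' → ∫ ω, X t ω * X t' ω ∂P = 0) (N : ℕ) :
    ∫ ω, cubeAverage (X · ω) N ^ 2 ∂P ≤ 7 * C ^ 2 / N := by
  simp only [cubeAverage, mul_pow]
  rw [integral_const_mul]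
  calc _ ≤ ((N : ℝ) ^ 3)⁻¹ ^ 2 * (C ^ 2 * (7 * N ^ 5)) := by
        grw [integral_sq_sum_le (cube N) hX hC Separated horth, card_not_separated_le N,
          Nat.cast_mul, Nat.cast_pow, Nat.cast_ofNat]
    _ = 7 * C ^ 2 / N := by
        rcases N.eq_zero_or_pos with rfl | hN
        · simp
        field_simp

lemma ae_tendsto_cubeAverage (hX : ∀ t, Measurable (X t)) (hC : ∀ t ω, |X t ω| ≤ C)
    (horth : ∀ t t', Separated t t' → ∫ ω, X t ω * X t' ω ∂P = 0) :
    ∀ᵐ ω ∂P, Tendsto (cubeAverage (X · ω)) atTop (𝓝 0) := by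
  have hmeas : ∀ N, Measurable fun ω => cubeAverage (X · ω) N := fun N =>
    (Finset.measurable_sum _ fun t _ => hX t).const_mul _
  have hsq : ∀ᵐ ω ∂P, Tendsto (fun m => cubeAverage (X · ω) (m ^ 2)) atTop (𝓝 0) := by
    refine ae_tendsto_zero_of_summable_integral_sq (fun m => (hmeas _).aemeasurable)
      (fun m => .of_bound ((hmeas _).pow_const 2).aestronglyMeasurable (C ^ 2)
        (ae_of_all _ fun ω => ?_))
      (.of_nonneg_of_le (fun m => integral_nonneg fun ω => sq_nonneg _)
        (fun m => integral_sq_cubeAverage_le (fun t => (hX t).aestronglyMeasurable) hC horth _) ?_)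
    · rw [Real.norm_eq_abs, abs_pow]
      exact pow_le_pow_left₀ (abs_nonneg _) (abs_cubeAverage_le (hC · ω) _) 2
    · exact ((Real.summable_one_div_nat_pow.2 one_lt_two).mul_left (7 * C ^ 2)).congr fun m => by
        push_cast; ring
  filter_upwards [hsq] with ω hω
  exact tendsto_cubeAverage_of_tendsto_sq (hC · ω) hω

end AlmostSureConvergence

section Sample

variable {Ω α β : Type*} [MeasurableSpace Ω] [MeasurableSpace α] [MeasurableSpace β]
  {P : Measure Ω} [IsFiniteMeasure P] {U : ℕ → Ω → α} {V : ℕ → Ω → β}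

def sample (U : ℕ → Ω → α) (V : ℕ → Ω → β) (t : ℕ × ℕ × ℕ) (ω : Ω) : (α × α) × β :=
  ((U t.1 ω, U t.2.1 ω), V t.2.2 ω)

lemma measurable_sample (hU : ∀ j, Measurable (U j)) (hV : ∀ k, Measurable (V k))
    (t : ℕ × ℕ × ℕ) : Measurable (sample U V t) := by
  unfold sample; fun_prop

lemma map_sample (hU : ∀ j, Measurable (U j)) (hV : ∀ k, Measurable (V k))
    (hUindep : iIndepFun U P) (hUid : ∀ j, P.map (U j) = P.map (U 0))
    (hVid : ∀ k, P.map (V k) = P.map (V 0))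
    (hUV : IndepFun (fun ω j => U j ω) (fun ω k => V k ω) P) {t : ℕ × ℕ × ℕ}
    (ht : t.1 ≠ t.2.1) :
    P.map (sample U V t) = ((P.map (U 0)).prod (P.map (U 0))).prod (P.map (V 0)) := by
  have hpair : IndepFun (fun ω => (U t.1 ω, U t.2.1 ω)) (V t.2.2) P :=
    hUV.comp (show Measurable fun u : ℕ → α => (u t.1, u t.2.1) by fun_prop)
      (measurable_pi_apply _)
  change P.map (fun ω => ((U t.1 ω, U t.2.1 ω), V t.2.2 ω)) = _
  rw [(indepFun_iff_map_prod_eq_prod_map_map (by fun_prop) (hV _).aemeasurable).1 hpair,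
    (indepFun_iff_map_prod_eq_prod_map_map (hU _).aemeasurable (hU _).aemeasurable).1
      (hUindep.indepFun ht), hUid t.1, hUid t.2.1, hVid]

lemma indepFun_sample_sample (hU : ∀ j, Measurable (U j)) (hV : ∀ k, Measurable (V k))
    (hUindep : iIndepFun U P) (hVindep : iIndepFun V P)
    (hUV : IndepFun (fun ω j => U j ω) (fun ω k => V k ω) P) {t t' : ℕ × ℕ × ℕ}
    (h : Separated t t') : IndepFun (sample U V t) (sample U V t') P := by
  obtain ⟨-, -, h₁, h₂, h₃, h₄, hk⟩ := h
  refine IndepFun.prodMk_prodMk_of_indepFun (by fun_prop) (by fun_prop) (hV _) (hV _) ?_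
    (hUindep.indepFun_prodMk_prodMk hU _ _ _ _ h₁ h₂ h₃ h₄) (hVindep.indepFun hk)
  exact hUV.comp
    (show Measurable fun u : ℕ → α => ((u t.1, u t.2.1), (u t'.1, u t'.2.1)) by fun_prop)
    (show Measurable fun v : ℕ → β => (v t.2.2, v t'.2.2) by fun_prop)

lemma integral_comp_sample_mul_eq_zero (hU : ∀ j, Measurable (U j))
    (hV : ∀ k, Measurable (V k)) (hUindep : iIndepFun U P) (hVindep : iIndepFun V P)
    (hUid : ∀ j, P.map (U j) = P.map (U 0)) (hVid : ∀ k, P.map (V k) = P.map (V 0))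
    (hUV : IndepFun (fun ω j => U j ω) (fun ω k => V k ω) P) {g : (α × α) × β → ℝ}
    (hg : Measurable g) (hg0 : ∫ ω, g (sample U V (0, 1, 0) ω) ∂P = 0) {t t' : ℕ × ℕ × ℕ}
    (h : Separated t t') :
    ∫ ω, g (sample U V t ω) * g (sample U V t' ω) ∂P = 0 := by
  have hid : IdentDistrib (sample U V t) (sample U V (0, 1, 0)) P P :=
    ⟨(measurable_sample hU hV _).aemeasurable, (measurable_sample hU hV _).aemeasurable, by
      rw [map_sample hU hV hUindep hUid hVid hUV h.1,
        map_sample hU hV hUindep hUid hVid hUV zero_ne_one]⟩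
  have hmean : ∫ ω, g (sample U V t ω) ∂P = 0 := ((hid.comp hg).integral_eq).trans hg0
  have hindep := (indepFun_sample_sample hU hV hUindep hVindep hUV h).comp hg hg
  have := hindep.integral_mul_eq_mul_integral
    (hg.comp (measurable_sample hU hV t)).aestronglyMeasurable
    (hg.comp (measurable_sample hU hV t')).aestronglyMeasurable
  simpa [hmean] using this

end Sample

end ThreeIndex

/-- **Strong law of large numbers for three-index averages.** If `(U_j)` and `(V_k)` are
two independent i.i.d. sequences and `H` is bounded measurable with
`E[H(U_1, U_2, V_1)] = 0`, then
`T_N = N^{-3} Σ_{i,j,k ≤ N} H(U_i, U_j, V_k) → 0` almost surely. -/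
theorem three_index_strong_law
    {Ω α β : Type*} [MeasurableSpace Ω] [MeasurableSpace α] [MeasurableSpace β]
    (P : Measure Ω) [IsProbabilityMeasure P]
    (U : ℕ → Ω → α) (V : ℕ → Ω → β)
    (hUmeas : ∀ j, Measurable (U j)) (hVmeas : ∀ k, Measurable (V k))
    (hUindep : iIndepFun U P)
    (hVindep : iIndepFun V P)
    (hUid : ∀ j, Measure.map (U j) P = Measure.map (U 0) P)
    (hVid : ∀ k, Measure.map (V k) P = Measure.map (V 0) P)
    (hUV : IndepFun (fun ω j => U j ω) (fun ω k => V k ω) P)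
    (H : α × α × β → ℝ) (hHmeas : Measurable H) (C : ℝ) (hHbdd : ∀ x, |H x| ≤ C)
    (hHcentered : ∫ ω, H (U 0 ω, U 1 ω, V 0 ω) ∂P = 0) :
    ∀ᵐ ω ∂P, Tendsto
      (fun N : ℕ => ((N : ℝ) ^ 3)⁻¹ * ∑ i ∈ Finset.range N, ∑ j ∈ Finset.range N,
        ∑ k ∈ Finset.range N, H (U i ω, U j ω, V k ω))
      atTop (nhds 0) := by
  filter_upwards [ThreeIndex.ae_tendsto_cubeAverage
    (X := fun t ω => H (U t.1 ω, U t.2.1 ω, V t.2.2 ω)) (fun t => by fun_prop) (fun _ _ => hHbdd _)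
    fun t t' h => ThreeIndex.integral_comp_sample_mul_eq_zero hUmeas hVmeas hUindep hVindep hUid
      hVid hUV (g := fun p => H (p.1.1, p.1.2, p.2)) (by fun_prop) hHcentered h] with ω hω
  refine hω.congr fun N => ?_
  simp [ThreeIndex.cubeAverage, ThreeIndex.cube, sum_product]
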